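/- Fix 0 < a < 1/100. For nonzero complex numbers x, y, w define f1 = |w^2*(4*w+9*x^2) - 27*y^2*(4*x^3+2*w*x+y^2)|, f2 = 4*|w+3*x^2|^4 + 81*|y^2+2*x^3+w*x|^2, and f3 = |w|^2*|y|^{a-2} + 4*|y|^2*(36*|x|^2*|w|^{a-2} + 1). Then f1^{a-2} * f2 * f3 tends to +∞ as (x,y,w) → (0,0,0) along points where y ≠ 0, w ≠ 0, and f1 ≠ 0. -/

import Mathlib

open Filter

section Prop3Aux
open Real


-- helper: (X^n)^b = X^(n*b) for rpow
lemma pow_rpow_aux (X : ℝ) (hX : 0 ≤ X) (n : ℕ) (b : ℝ) :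
    (X ^ n) ^ b = X ^ ((n : ℝ) * b) := by
  rw [← Real.rpow_natCast X n, ← Real.rpow_mul hX]

lemma claim1 (S T f1 : ℝ) (hS : 0 ≤ S) (hT0 : 0 ≤ T) (hT1 : T ≤ 1) (hf1 : 0 ≤ f1)
    (h : f1 ≤ 4 * S ^ 3 + 27 * T ^ 2) :
    f1 ^ ((4:ℝ)/3) ≤ 32 * (4 * S ^ 4 + 81 * T ^ 2) := by
  have h98 : ((31:ℝ)) ^ ((4:ℝ)/3) ≤ 98 := by
    have h3 : (((31:ℝ)) ^ ((4:ℝ)/3)) ^ (3:ℕ) = 31 ^ (4:ℕ) := by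
      rw [← Real.rpow_natCast ((31:ℝ) ^ ((4:ℝ)/3)) 3, ← Real.rpow_mul (by norm_num)]
      norm_num
    have h4 : (((31:ℝ)) ^ ((4:ℝ)/3)) ^ (3:ℕ) ≤ 98 ^ (3:ℕ) := by rw [h3]; norm_num
    exact le_of_pow_le_pow_left₀ (by norm_num) (by norm_num) h4
  have hM : f1 ≤ 31 * max (S ^ 3) (T ^ 2) := by
    rcases le_total (S ^ 3) (T ^ 2) with hc | hc
    · rw [max_eq_right hc]; nlinarith [pow_nonneg hS 3]
    · rw [max_eq_left hc]; nlinarith [sq_nonneg T]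
  have hMnn : (0:ℝ) ≤ max (S ^ 3) (T ^ 2) := le_max_of_le_right (sq_nonneg T)
  have step1 : f1 ^ ((4:ℝ)/3) ≤ (31:ℝ) ^ ((4:ℝ)/3) * (max (S ^ 3) (T ^ 2)) ^ ((4:ℝ)/3) := by
    rw [← Real.mul_rpow (by norm_num) hMnn]
    exact Real.rpow_le_rpow hf1 hM (by norm_num)
  have step2 : (max (S ^ 3) (T ^ 2)) ^ ((4:ℝ)/3) ≤ S ^ 4 + T ^ 2 := by
    rcases max_cases (S ^ 3) (T ^ 2) with ⟨he, _⟩ | ⟨he, _⟩ <;> rw [he]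
    · rw [pow_rpow_aux S hS 3]
      have he4 : ((3:ℕ):ℝ) * ((4:ℝ)/3) = ((4:ℕ):ℝ) := by norm_num
      rw [he4, Real.rpow_natCast]
      nlinarith [sq_nonneg T]
    · rcases eq_or_lt_of_le hT0 with hT | hT
      · rw [← hT]
        have hz : ((0:ℝ)^2) ^ ((4:ℝ)/3) = 0 := by
          rw [pow_rpow_aux 0 le_rfl 2, Real.zero_rpow (by norm_num)]
        rw [hz]; positivity
      · have : (T ^ 2) ^ ((4:ℝ)/3) ≤ (T ^ 2) ^ (1:ℝ) := by
          apply Real.rpow_le_rpow_of_exponent_ge (by positivity) (by nlinarith) (by norm_num)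
        rw [Real.rpow_one] at this
        nlinarith [pow_nonneg hS 4]
  calc f1 ^ ((4:ℝ)/3) ≤ (31:ℝ) ^ ((4:ℝ)/3) * (max (S ^ 3) (T ^ 2)) ^ ((4:ℝ)/3) := step1
    _ ≤ 98 * (S ^ 4 + T ^ 2) := by
        apply mul_le_mul h98 step2 (by positivity) (by norm_num)
    _ ≤ 32 * (4 * S ^ 4 + 81 * T ^ 2) := by nlinarith [pow_nonneg hS 4, sq_nonneg T]

lemma pow_rpow_aux' (X : ℝ) (hX : 0 ≤ X) (n : ℕ) (b : ℝ) :
    (X ^ n) ^ b = X ^ ((n : ℝ) * b) := by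
  rw [← Real.rpow_natCast X n, ← Real.rpow_mul hX]

private lemma amgm1 (W u Y : ℝ) : 4*(W * (u*Y)) ≤ W^2*(u*u) + 4*Y^2 := by
  nlinarith [sq_nonneg (W*u - 2*Y)]

private lemma amgm2 (W u X Y v : ℝ) (hX : 0 ≤ X) (hY : 0 ≤ Y) (hW : 0 ≤ W)
    (hu : 0 ≤ u) (hv : 0 ≤ v) :
    4*(X*((v*W) * (u*Y))) ≤ W^2*(u*u) + 144*X^2*Y^2*(v*v) := by
  nlinarith [sq_nonneg (W*u - 12*X*Y*v),
    mul_nonneg (mul_nonneg (mul_nonneg (mul_nonneg hX hW) hu) hY) hv]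

private lemma wx2_aux (W X : ℝ) (hW : 0 < W) (h : W^3 ≤ W^2*X^2) : W ≤ X^2 := by
  nlinarith [mul_pos hW hW]

private lemma xpos_aux (W X : ℝ) (hW : 0 < W) (hX : 0 ≤ X) (h : W ≤ X^2) : 0 < X := by
  nlinarith

private lemma expa1 (a : ℝ) (ha : 0 < a) (ha' : a < 1/100) :
    2/(2-a) ≤ 3*(2/3-2*a) := by
  rw [div_le_iff₀ (by linarith : (0:ℝ) < 2 - a)]; nlinarith

private lemma expa2 (a : ℝ) (ha : 0 < a) (ha' : a < 1/100) :
    a/2 + a/(2-a) ≤ 2*(2/3-2*a) := by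
  have hda : a/(2-a) ≤ a := by
    rw [div_le_iff₀ (by linarith : (0:ℝ) < 2 - a)]; nlinarith
  linarith

set_option maxHeartbeats 1000000 in
lemma claim2 (a X Y W f1 f3 : ℝ) (ha : 0 < a) (ha' : a < 1/100)
    (hX0 : 0 ≤ X) (hX1 : X ≤ 1) (hY0 : 0 < Y) (hY1 : Y ≤ 1) (hW0 : 0 < W) (hW1 : W ≤ 1)
    (hf10 : 0 ≤ f1) (hf11 : f1 ≤ 1)
    (hf3def : f3 = W^2 * Y^(a-2) + 4*Y^2*(36*X^2*W^(a-2) + 1))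
    (hM : f1 ≤ 432 * max (max (W^3) (W^2*X^2)) (max (Y^2*X^3) (Y^4))) :
    f1 ^ (2/3 - 2*a) ≤ 108 * f3 := by
  have h2a : (0:ℝ) < 2 - a := by linarith
  have hb0 : (0:ℝ) ≤ 2/3 - 2*a := by linarith
  have hYa : (0:ℝ) < Y^(a-2) := Real.rpow_pos_of_pos hY0 _
  have hWa : (0:ℝ) < W^(a-2) := Real.rpow_pos_of_pos hW0 _
  have hf3split : f3 = W^2 * Y^(a-2) + 144*X^2*Y^2*W^(a-2) + 4*Y^2 := by
    rw [hf3def]; ring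
  have hf3pos : 0 < f3 := by rw [hf3def]; positivity
  by_cases h3 : 1 ≤ f3
  · calc f1 ^ (2/3 - 2*a) ≤ 1 := Real.rpow_le_one hf10 hf11 hb0
      _ ≤ 108 * f3 := by linarith
  push_neg at h3
  have ht1 : W^2 * Y^(a-2) ≤ 1 := by
    have h0 : (0:ℝ) ≤ 144*X^2*Y^2*W^(a-2) := by positivity
    have h1 : (0:ℝ) ≤ 4*Y^2 := by positivity
    rw [hf3split] at h3; linarith
  have hYaa : Y^(a-2) * Y^(2-a) = 1 := by
    rw [← Real.rpow_add hY0]; norm_num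
  have hW2Y : W^2 ≤ Y^(2-a) := by
    have h := mul_le_mul_of_nonneg_right ht1 (Real.rpow_pos_of_pos hY0 (2-a)).le
    rw [one_mul, mul_assoc, hYaa, mul_one] at h
    exact h
  have hWY : W^(2/(2-a)) ≤ Y := by
    have h1 : W^(2/(2-a)) = (W^2) ^ (1/(2-a)) := by
      rw [pow_rpow_aux' W hW0.le 2]
      congr 1; push_cast; ring
    have h2 : (Y^(2-a))^(1/(2-a)) = Y := by
      rw [← Real.rpow_mul hY0.le, mul_one_div, div_self h2a.ne', Real.rpow_one]
    calc W^(2/(2-a)) = (W^2)^(1/(2-a)) := h1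
      _ ≤ (Y^(2-a))^(1/(2-a)) := Real.rpow_le_rpow (by positivity) hW2Y (by positivity)
      _ = Y := h2
  have hWaY : W^(a/(2-a)) ≤ Y^(a/2) := by
    have h1 : W^(a/(2-a)) = (W^(2/(2-a)))^(a/2) := by
      rw [← Real.rpow_mul hW0.le]; congr 1; field_simp
    rw [h1]
    exact Real.rpow_le_rpow (Real.rpow_nonneg hW0.le _) hWY (by linarith)
  -- the four cases
  obtain ⟨M, hMdef⟩ : ∃ M : ℝ, M = max (max (W^3) (W^2*X^2)) (max (Y^2*X^3) (Y^4)) := ⟨_, rfl⟩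
  rw [← hMdef] at hM
  have hMW3 : W^3 ≤ M := hMdef ▸ le_trans (le_max_left _ _) (le_max_left _ _)
  have hc : M = W^3 ∨ M = W^2*X^2 ∨ M = Y^2*X^3 ∨ M = Y^4 := by
    rcases max_choice (max (W^3) (W^2*X^2)) (max (Y^2*X^3) (Y^4)) with h | h <;> rw [hMdef, h]
    · rcases max_choice (W^3) (W^2*X^2) with h' | h' <;> rw [h'] <;> tauto
    · rcases max_choice (Y^2*X^3) (Y^4) with h' | h' <;> rw [h'] <;> tauto
  have key : ∀ u : ℝ, 0 ≤ u → f1 ≤ 432*u → 4*u^(2/3-2*a) ≤ f3 →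
      f1^(2/3-2*a) ≤ 108*f3 := by
    intro u hu hfu h4
    have h1 : f1^(2/3-2*a) ≤ (432*u)^(2/3-2*a) := Real.rpow_le_rpow hf10 hfu hb0
    rw [Real.mul_rpow (by norm_num) hu] at h1
    have h2 : (432:ℝ)^(2/3-2*a) ≤ 432 := by
      calc (432:ℝ)^(2/3-2*a) ≤ 432^(1:ℝ) :=
            Real.rpow_le_rpow_of_exponent_le (by norm_num) (by linarith)
        _ = 432 := Real.rpow_one _
    have hub : 0 ≤ u^(2/3-2*a) := Real.rpow_nonneg hu _
    have h5 := mul_le_mul_of_nonneg_right h2 hub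
    calc f1^(2/3-2*a) ≤ 432^(2/3-2*a) * u^(2/3-2*a) := h1
      _ ≤ 432 * u^(2/3-2*a) := h5
      _ = 108 * (4*u^(2/3-2*a)) := by ring
      _ ≤ 108 * f3 := by linarith
  -- AM-GM ingredients
  obtain ⟨u, hudef⟩ : ∃ u : ℝ, u = Y^((a-2)/2) := ⟨_, rfl⟩
  have hu0 : 0 < u := hudef ▸ Real.rpow_pos_of_pos hY0 _
  have huu : u * u = Y^(a-2) := by
    rw [hudef, ← Real.rpow_add hY0]; congr 1; ring
  have huY : u * Y = Y^(a/2) := by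
    rw [hudef, ← Real.rpow_add_one hY0.ne']; congr 1; ring
  obtain ⟨v, hvdef⟩ : ∃ v : ℝ, v = W^((a-2)/2) := ⟨_, rfl⟩
  have hv0 : 0 < v := hvdef ▸ Real.rpow_pos_of_pos hW0 _
  have hvv : v * v = W^(a-2) := by
    rw [hvdef, ← Real.rpow_add hW0]; congr 1; ring
  have hvW : v * W = W^(a/2) := by
    rw [hvdef, ← Real.rpow_add_one hW0.ne']; congr 1; ring
  rcases hc with hcc | hcc | hcc | hcc
  · -- M = W^3
    refine key (W^3) (by positivity) (by rw [← hcc]; exact hM) ?_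
    have e1 : (W^3 : ℝ)^(2/3-2*a) = W^((3:ℝ)*(2/3-2*a)) := by
      rw [pow_rpow_aux' W hW0.le 3]; norm_num
    have s1 : W^((3:ℝ)*(2/3-2*a)) ≤ W^(2/(2-a)) :=
      Real.rpow_le_rpow_of_exponent_ge hW0 hW1 (expa1 a ha ha')
    have s2 : W^(2/(2-a)) = W * W^(a/(2-a)) := by
      nth_rewrite 1 [show 2/(2-a) = a/(2-a) + 1 by field_simp; ring]
      rw [Real.rpow_add_one hW0.ne']; ring
    have s3 : W * W^(a/(2-a)) ≤ W * Y^(a/2) :=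
      mul_le_mul_of_nonneg_left hWaY hW0.le
    have hf3ge : W^2*(u*u) + 4*Y^2 ≤ f3 := by
      rw [huu, hf3split]
      have h0 : (0:ℝ) ≤ 144*X^2*Y^2*W^(a-2) := by positivity
      linarith
    calc 4*(W^3:ℝ)^(2/3-2*a) = 4*W^((3:ℝ)*(2/3-2*a)) := by rw [e1]
      _ ≤ 4*W^(2/(2-a)) := by linarith
      _ = 4*(W * W^(a/(2-a))) := by rw [s2]
      _ ≤ 4*(W * Y^(a/2)) := by linarith
      _ = 4*(W * (u*Y)) := by rw [huY]
      _ ≤ W^2*(u*u) + 4*Y^2 := amgm1 W u Y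
      _ ≤ f3 := hf3ge
  · -- M = W^2*X^2
    have hWX2 : W ≤ X^2 := wx2_aux W X hW0 (by rw [hcc] at hMW3; exact hMW3)
    have hXpos : 0 < X := xpos_aux W X hW0 hX0 hWX2
    refine key (W^2*X^2) (by positivity) (by rw [← hcc]; exact hM) ?_
    have e1 : (W^2*X^2 : ℝ)^(2/3-2*a) = (W*X)^((2:ℝ)*(2/3-2*a)) := by
      rw [show W^2*X^2 = (W*X)^2 by ring, pow_rpow_aux' (W*X) (by positivity) 2]
      norm_num
    have e2 : (W*X)^((2:ℝ)*(2/3-2*a)) = W^((2:ℝ)*(2/3-2*a)) * X^((2:ℝ)*(2/3-2*a)) :=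
      Real.mul_rpow hW0.le hX0
    have sX : X^((2:ℝ)*(2/3-2*a)) ≤ X := by
      nth_rewrite 2 [show (X:ℝ) = X^(1:ℝ) from (Real.rpow_one X).symm]
      exact Real.rpow_le_rpow_of_exponent_ge hXpos hX1 (by linarith)
    have sW : W^((2:ℝ)*(2/3-2*a)) ≤ W^(a/2 + a/(2-a)) :=
      Real.rpow_le_rpow_of_exponent_ge hW0 hW1 (expa2 a ha ha')
    have sW2 : W^(a/2 + a/(2-a)) = W^(a/2) * W^(a/(2-a)) := Real.rpow_add hW0 _ _
    have sW3 : W^(a/2) * W^(a/(2-a)) ≤ W^(a/2) * Y^(a/2) :=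
      mul_le_mul_of_nonneg_left hWaY (Real.rpow_nonneg hW0.le _)
    have hf3ge : W^2*(u*u) + 144*X^2*Y^2*(v*v) ≤ f3 := by
      rw [huu, hvv, hf3split]
      have h1 : (0:ℝ) ≤ 4*Y^2 := by positivity
      linarith
    calc 4*(W^2*X^2:ℝ)^(2/3-2*a)
        = 4*(W^((2:ℝ)*(2/3-2*a)) * X^((2:ℝ)*(2/3-2*a))) := by rw [e1, e2]
      _ ≤ 4*(W^(a/2 + a/(2-a)) * X) := by
          have h0 : 0 ≤ W^((2:ℝ)*(2/3-2*a)) := Real.rpow_nonneg hW0.le _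
          have h1 : 0 ≤ W^(a/2 + a/(2-a)) := Real.rpow_nonneg hW0.le _
          have := mul_le_mul sW sX (Real.rpow_nonneg hX0 _) h1
          linarith
      _ = 4*((W^(a/2) * W^(a/(2-a))) * X) := by rw [sW2]
      _ ≤ 4*((W^(a/2) * Y^(a/2)) * X) := by
          have := mul_le_mul_of_nonneg_right sW3 hX0
          linarith
      _ = 4*(X*((v*W) * (u*Y))) := by rw [hvW, huY]; ring
      _ ≤ W^2*(u*u) + 144*X^2*Y^2*(v*v) :=
          amgm2 W u X Y v hX0 hY0.le hW0.le hu0.le hv0.le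
      _ ≤ f3 := hf3ge
  · -- M = Y^2*X^3
    have hW3 : W^3 ≤ Y^2*X^3 := by rw [hcc] at hMW3; exact hMW3
    have hXpos : 0 < X := by
      rcases hX0.eq_or_lt with hX | hX
      · exfalso; rw [← hX] at hW3; norm_num at hW3
        exact absurd hW3 (not_le.2 (pow_pos hW0 3))
      · exact hX
    refine key (Y^2*X^3) (by positivity) (by rw [← hcc]; exact hM) ?_
    have hYX0 : (0:ℝ) < Y^((2:ℝ)/3) * X := by positivity
    have hWYX : W ≤ Y^((2:ℝ)/3) * X := by
      have hcube : (Y^((2:ℝ)/3) * X)^3 = Y^2*X^3 := by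
        rw [mul_pow, ← Real.rpow_natCast (Y^((2:ℝ)/3)) 3, ← Real.rpow_mul hY0.le]
        rw [show ((2:ℝ)/3)*((3:ℕ):ℝ) = ((2:ℕ):ℝ) by norm_num, Real.rpow_natCast]
      apply le_of_pow_le_pow_left₀ (n := 3) (by norm_num) hYX0.le
      rw [hcube]; exact hW3
    have sWa : (Y^((2:ℝ)/3) * X)^(a-2) ≤ W^(a-2) :=
      Real.rpow_le_rpow_of_nonpos hW0 hWYX (by linarith)
    have eYX : (Y^((2:ℝ)/3) * X)^(a-2) = Y^(((2:ℝ)/3)*(a-2)) * X^(a-2) := by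
      rw [Real.mul_rpow (Real.rpow_nonneg hY0.le _) hX0, ← Real.rpow_mul hY0.le]
    have eX : X^(2:ℝ) * X^(a-2) = X^a := by
      rw [← Real.rpow_add hXpos]; congr 1; ring
    have eY : Y^(2:ℝ) * Y^(((2:ℝ)/3)*(a-2)) = Y^((2+2*a)/3) := by
      rw [← Real.rpow_add hY0]; congr 1; ring
    have sX : X^((3:ℝ)*(2/3-2*a)) ≤ X^a :=
      Real.rpow_le_rpow_of_exponent_ge hXpos hX1 (by linarith)
    have sY : Y^((2:ℝ)*(2/3-2*a)) ≤ Y^((2+2*a)/3) :=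
      Real.rpow_le_rpow_of_exponent_ge hY0 hY1 (by linarith)
    have eterm : (Y^2*X^3 : ℝ)^(2/3-2*a) = Y^((2:ℝ)*(2/3-2*a)) * X^((3:ℝ)*(2/3-2*a)) := by
      rw [Real.mul_rpow (by positivity) (by positivity),
        pow_rpow_aux' Y hY0.le 2, pow_rpow_aux' X hX0 3]
      norm_num
    have hf3ge : 144*X^2*Y^2*W^(a-2) ≤ f3 := by
      rw [hf3split]
      have h0 : (0:ℝ) ≤ W^2*Y^(a-2) := by positivity
      have h1 : (0:ℝ) ≤ 4*Y^2 := by positivity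
      linarith
    have chain : 144*(X^a * Y^((2+2*a)/3)) ≤ 144*X^2*Y^2*W^(a-2) := by
      have h1 : Y^(((2:ℝ)/3)*(a-2)) * X^(a-2) ≤ W^(a-2) := by rw [← eYX]; exact sWa
      have h2 : (144*X^2*Y^2)*(Y^(((2:ℝ)/3)*(a-2)) * X^(a-2)) ≤ (144*X^2*Y^2)*W^(a-2) :=
        mul_le_mul_of_nonneg_left h1 (by positivity)
      have e3 : 144*(X^a * Y^((2+2*a)/3)) = (144*X^2*Y^2)*(Y^(((2:ℝ)/3)*(a-2)) * X^(a-2)) := by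
        rw [← eX, ← eY]
        rw [show (X:ℝ)^(2:ℝ) = X^(2:ℕ) from Real.rpow_natCast X 2,
          show (Y:ℝ)^(2:ℝ) = Y^(2:ℕ) from Real.rpow_natCast Y 2]
        push_cast; ring
      calc 144*(X^a * Y^((2+2*a)/3)) = (144*X^2*Y^2)*(Y^(((2:ℝ)/3)*(a-2)) * X^(a-2)) := e3
        _ ≤ (144*X^2*Y^2)*W^(a-2) := h2
        _ = 144*X^2*Y^2*W^(a-2) := by ring
    have step : 4*(Y^2*X^3 : ℝ)^(2/3-2*a) ≤ 144*(X^a * Y^((2+2*a)/3)) := by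
      rw [eterm]
      have h := mul_le_mul sY sX (Real.rpow_nonneg hX0 _) (Real.rpow_nonneg hY0.le _)
      have h0 : 0 ≤ Y^((2+2*a)/3) * X^a :=
        mul_nonneg (Real.rpow_nonneg hY0.le _) (Real.rpow_nonneg hX0 _)
      calc 4*(Y^((2:ℝ)*(2/3-2*a)) * X^((3:ℝ)*(2/3-2*a)))
          ≤ 4*(Y^((2+2*a)/3) * X^a) := by linarith
        _ ≤ 144*(Y^((2+2*a)/3) * X^a) := by linarith
        _ = 144*(X^a * Y^((2+2*a)/3)) := by ring
    linarith
  · -- M = Y^4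
    refine key (Y^4) (by positivity) (by rw [← hcc]; exact hM) ?_
    have e1 : (Y^4 : ℝ)^(2/3-2*a) = Y^((4:ℝ)*(2/3-2*a)) := by
      rw [pow_rpow_aux' Y hY0.le 4]; norm_num
    have s1 : Y^((4:ℝ)*(2/3-2*a)) ≤ Y^(2:ℝ) :=
      Real.rpow_le_rpow_of_exponent_ge hY0 hY1 (by linarith)
    have s2 : Y^(2:ℝ) = Y^(2:ℕ) := Real.rpow_natCast Y 2
    have hf3ge : 4*Y^2 ≤ f3 := by
      rw [hf3split]
      have h0 : (0:ℝ) ≤ W^2*Y^(a-2) := by positivity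
      have h1 : (0:ℝ) ≤ 144*X^2*Y^2*W^(a-2) := by positivity
      linarith
    calc 4*(Y^4:ℝ)^(2/3-2*a) = 4*Y^((4:ℝ)*(2/3-2*a)) := by rw [e1]
      _ ≤ 4*(Y^(2:ℕ) : ℝ) := by rw [← s2]; linarith
      _ ≤ f3 := by push_cast; exact hf3ge

section
variable (a : ℝ)

private lemma tri_to_max (W X Y f1 M : ℝ)
    (htri : f1 ≤ 4*W^3 + 9*W^2*X^2 + 108*Y^2*X^3 + 54*W*X*Y^2 + 27*Y^4)
    (h1 : W^3 ≤ M) (h2 : W^2*X^2 ≤ M) (h3 : Y^2*X^3 ≤ M) (h4 : Y^4 ≤ M) :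
    f1 ≤ 432 * M := by
  nlinarith [sq_nonneg (W*X - Y^2)]

set_option maxHeartbeats 1000000 in
lemma prop3_pointwise (ha : 0 < a) (ha' : a < 1/100) (x y w : ℂ) (r : ℝ)
    (hy : y ≠ 0) (hw : w ≠ 0)
    (hf1ne : ‖w^2*(4*w+9*x^2) - 27*y^2*(4*x^3+2*w*x+y^2)‖ ≠ 0)
    (hr : 0 < r) (hr' : r ≤ 1/100)
    (hxr : ‖x‖ ≤ r) (hyr : ‖y‖ ≤ r) (hwr : ‖w‖ ≤ r) :
    (432*r^3)^(-a) / 3456 ≤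
      ‖w^2*(4*w+9*x^2) - 27*y^2*(4*x^3+2*w*x+y^2)‖ ^ (a-2) *
      (4*‖w+3*x^2‖^4 + 81*‖y^2+2*x^3+w*x‖^2) *
      (‖w‖^2 * ‖y‖^(a-2) + 4*‖y‖^2*(36*‖x‖^2*‖w‖^(a-2)+1)) := by
  obtain ⟨X, hX⟩ : ∃ X, X = ‖x‖ := ⟨_, rfl⟩
  obtain ⟨Y, hY⟩ : ∃ Y, Y = ‖y‖ := ⟨_, rfl⟩
  obtain ⟨W, hW⟩ : ∃ W, W = ‖w‖ := ⟨_, rfl⟩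
  obtain ⟨S, hS⟩ : ∃ S, S = ‖w+3*x^2‖ := ⟨_, rfl⟩
  obtain ⟨T, hT⟩ : ∃ T, T = ‖y^2+2*x^3+w*x‖ := ⟨_, rfl⟩
  obtain ⟨f1, hf1⟩ : ∃ f1, f1 = ‖w^2*(4*w+9*x^2) - 27*y^2*(4*x^3+2*w*x+y^2)‖ :=
    ⟨_, rfl⟩
  have hX0 : 0 ≤ X := hX ▸ norm_nonneg x
  have hY0 : 0 < Y := hY ▸ (norm_pos_iff.mpr hy)
  have hW0 : 0 < W := hW ▸ (norm_pos_iff.mpr hw)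
  have hS0 : 0 ≤ S := hS ▸ norm_nonneg _
  have hT0 : 0 ≤ T := hT ▸ norm_nonneg _
  have hf10 : 0 < f1 := hf1 ▸ (norm_pos_iff.mpr (by
    intro h; exact hf1ne (by rw [h]; exact norm_zero)))
  have hXr : X ≤ r := hX ▸ hxr
  have hYr : Y ≤ r := hY ▸ hyr
  have hWr : W ≤ r := hW ▸ hwr
  have hX1 : X ≤ 1 := by linarith
  have hY1 : Y ≤ 1 := by linarith
  have hW1 : W ≤ 1 := by linarith
  -- bound f1 ≤ 4 S^3 + 27 T^2
  have hid : w^2*(4*w+9*x^2) - 27*y^2*(4*x^3+2*w*x+y^2)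
      = 4*(w+3*x^2)^3 - 27*(y^2+2*x^3+w*x)^2 := by ring
  have hf1ST : f1 ≤ 4*S^3 + 27*T^2 := by
    rw [hf1, hid, hS, hT]
    refine (norm_sub_le _ _).trans ?_
    simp only [norm_mul, norm_pow]
    have h4 : ‖(4:ℂ)‖ = 4 := by norm_num [Complex.norm_ofNat]
    have h27 : ‖(27:ℂ)‖ = 27 := by norm_num [Complex.norm_ofNat]
    rw [h4, h27]
  -- bound T ≤ 1
  have hTb : T ≤ Y^2 + 2*X^3 + W*X := by
    rw [hT, hX, hY, hW]
    refine (norm_add_le _ _).trans ?_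
    have h1 := norm_add_le (y^2) (2*x^3)
    simp only [norm_mul, norm_pow] at h1 ⊢
    have h2 : ‖(2:ℂ)‖ = 2 := by norm_num [Complex.norm_ofNat]
    rw [h2] at h1
    linarith
  have hY2 : Y^2 ≤ r^2 := pow_le_pow_left₀ hY0.le hYr 2
  have hX2 : X^2 ≤ r^2 := pow_le_pow_left₀ hX0 hXr 2
  have hW2 : W^2 ≤ r^2 := pow_le_pow_left₀ hW0.le hWr 2
  have hX3 : X^3 ≤ r^3 := pow_le_pow_left₀ hX0 hXr 3
  have hW3 : W^3 ≤ r^3 := pow_le_pow_left₀ hW0.le hWr 3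
  have hWX : W*X ≤ r^2 := by
    calc W*X ≤ r*r := mul_le_mul hWr hXr hX0 hr.le
      _ = r^2 := (sq r).symm
  have hr2 : r^2 ≤ (1/100)^2 := pow_le_pow_left₀ hr.le hr' 2
  have hr3 : r^3 ≤ (1/100)^3 := pow_le_pow_left₀ hr.le hr' 3
  have hr43 : r^4 ≤ r^3 := pow_le_pow_of_le_one hr.le (by linarith) (by norm_num)
  have hr53 : r^5 ≤ r^3 := pow_le_pow_of_le_one hr.le (by linarith) (by norm_num)
  have hT1 : T ≤ 1 := by nlinarith [hTb, hY2, hX3, hWX, hr2, hr3]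
  -- bound f1 ≤ 432 * max ...
  have htri : f1 ≤ 4*W^3 + 9*W^2*X^2 + 108*Y^2*X^3 + 54*W*X*Y^2 + 27*Y^4 := by
    rw [hf1, hX, hY, hW]
    have h1 : ‖w^2*(4*w+9*x^2) - 27*y^2*(4*x^3+2*w*x+y^2)‖ ≤
        ‖w^2*(4*w+9*x^2)‖ + ‖27*y^2*(4*x^3+2*w*x+y^2)‖ :=
      norm_sub_le _ _
    have h2 : ‖w^2*(4*w+9*x^2)‖ ≤
        ‖w‖^2*(4*‖w‖+9*‖x‖^2) := by
      rw [norm_mul, norm_pow]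
      refine mul_le_mul_of_nonneg_left ?_ (by positivity)
      refine (norm_add_le _ _).trans ?_
      simp [norm_mul, norm_pow]
    have h3 : ‖27*y^2*(4*x^3+2*w*x+y^2)‖ ≤
        27*‖y‖^2*(4*‖x‖^3+2*‖w‖*‖x‖+‖y‖^2) := by
      rw [norm_mul, norm_mul, norm_pow]
      have hin : ‖4*x^3+2*w*x+y^2‖ ≤
          4*‖x‖^3+2*‖w‖*‖x‖+‖y‖^2 := by
        refine (norm_add_le _ _).trans ?_
        have h5 := norm_add_le (4*x^3) (2*w*x)
        simp only [norm_mul, norm_pow] at h5 ⊢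
        have h4 : ‖(4:ℂ)‖ = 4 := by norm_num [Complex.norm_ofNat]
        have h2' : ‖(2:ℂ)‖ = 2 := by norm_num [Complex.norm_ofNat]
        rw [h4, h2'] at h5
        linarith [h5]
      have h27 : ‖(27:ℂ)‖ = 27 := by norm_num [Complex.norm_ofNat]
      rw [h27]
      refine mul_le_mul_of_nonneg_left hin (by positivity)
    calc ‖w^2*(4*w+9*x^2) - 27*y^2*(4*x^3+2*w*x+y^2)‖
        ≤ ‖w^2*(4*w+9*x^2)‖ + ‖27*y^2*(4*x^3+2*w*x+y^2)‖ := h1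
      _ ≤ ‖w‖^2*(4*‖w‖+9*‖x‖^2)
          + 27*‖y‖^2*(4*‖x‖^3+2*‖w‖*‖x‖+‖y‖^2) := by
          linarith
      _ = 4*‖w‖^3 + 9*‖w‖^2*‖x‖^2
          + 108*‖y‖^2*‖x‖^3
          + 54*‖w‖*‖x‖*‖y‖^2 + 27*‖y‖^4 := by ring
  obtain ⟨M, hMdef⟩ : ∃ M : ℝ, M = max (max (W^3) (W^2*X^2)) (max (Y^2*X^3) (Y^4)) := ⟨_, rfl⟩
  have hM1 : W^3 ≤ M := hMdef ▸ le_trans (le_max_left _ _) (le_max_left _ _)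
  have hM2 : W^2*X^2 ≤ M := hMdef ▸ le_trans (le_max_right _ _) (le_max_left _ _)
  have hM3 : Y^2*X^3 ≤ M := hMdef ▸ le_trans (le_max_left _ _) (le_max_right _ _)
  have hM4 : Y^4 ≤ M := hMdef ▸ le_trans (le_max_right _ _) (le_max_right _ _)
  have hMr : M ≤ r^3 := by
    have e1 : W^2*X^2 ≤ r^2*r^2 := mul_le_mul hW2 hX2 (by positivity) (by positivity)
    have e2 : Y^2*X^3 ≤ r^2*r^3 := mul_le_mul hY2 hX3 (by positivity) (by positivity)
    have e3 : Y^4 ≤ r^4 := pow_le_pow_left₀ hY0.le hYr 4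
    have e4 : r^2*r^2 = r^4 := by ring
    have e5 : r^2*r^3 = r^5 := by ring
    rw [e4] at e1; rw [e5] at e2
    rw [hMdef]
    exact max_le (max_le hW3 (by linarith)) (max_le (by linarith) (by linarith))
  have hf1M : f1 ≤ 432 * M := tri_to_max W X Y f1 M htri hM1 hM2 hM3 hM4
  have hf1r : f1 ≤ 432 * r^3 := by linarith
  have hf11 : f1 ≤ 1 := by linarith
  -- apply the two claims
  have hC1 : f1 ^ ((4:ℝ)/3) ≤ 32 * (4*S^4 + 81*T^2) :=
    claim1 S T f1 hS0 hT0 hT1 hf10.le hf1ST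
  have hC2 : f1 ^ (2/3 - 2*a) ≤ 108 * (W^2 * Y^(a-2) + 4*Y^2*(36*X^2*W^(a-2) + 1)) :=
    claim2 a X Y W f1 _ ha ha' hX0 hX1 hY0 hY1 hW0 hW1 hf10.le hf11 rfl
      (by rw [← hMdef]; exact hf1M)
  obtain ⟨f2, hf2⟩ : ∃ f2, f2 = 4*S^4 + 81*T^2 := ⟨_, rfl⟩
  obtain ⟨f3, hf3⟩ : ∃ f3, f3 = W^2 * Y^(a-2) + 4*Y^2*(36*X^2*W^(a-2) + 1) := ⟨_, rfl⟩
  rw [← hf2] at hC1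
  rw [← hf3] at hC2
  have hf2pos : 0 < f2 := by
    have h43 : 0 < f1 ^ ((4:ℝ)/3) := Real.rpow_pos_of_pos hf10 _
    linarith
  have hf3pos : 0 < f3 := by
    rw [hf3]
    have := Real.rpow_pos_of_pos hY0 (a-2)
    have := Real.rpow_pos_of_pos hW0 (a-2)
    positivity
  -- final assembly
  have hgoal : (432*r^3)^(-a) / 3456 ≤ f1^(a-2) * f2 * f3 := by
    have hA : 0 < f1^(a-2) := Real.rpow_pos_of_pos hf10 _
    have step1 : f1^(a-2) * (f1^((4:ℝ)/3)/32) * (f1^(2/3-2*a)/108) ≤ f1^(a-2) * f2 * f3 := by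
      have l1 : f1^((4:ℝ)/3)/32 ≤ f2 := by linarith
      have l2 : f1^(2/3-2*a)/108 ≤ f3 := by linarith
      have p1 : 0 ≤ f1^((4:ℝ)/3)/32 := by positivity
      have p2 : 0 ≤ f1^(2/3-2*a)/108 := by positivity
      have m1 : f1^(a-2) * (f1^((4:ℝ)/3)/32) ≤ f1^(a-2) * f2 :=
        mul_le_mul_of_nonneg_left l1 hA.le
      have m2 : f1^(a-2) * (f1^((4:ℝ)/3)/32) * (f1^(2/3-2*a)/108) ≤
          (f1^(a-2) * f2) * (f1^(2/3-2*a)/108) :=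
        mul_le_mul_of_nonneg_right m1 p2
      have m3 : (f1^(a-2) * f2) * (f1^(2/3-2*a)/108) ≤ (f1^(a-2) * f2) * f3 :=
        mul_le_mul_of_nonneg_left l2 (by positivity)
      linarith
    have e0 : f1^(a-2)*f1^((4:ℝ)/3)*f1^(2/3-2*a) = f1^(-a) := by
      rw [← Real.rpow_add hf10, ← Real.rpow_add hf10]; congr 1; ring
    have eqn : f1^(a-2) * (f1^((4:ℝ)/3)/32) * (f1^(2/3-2*a)/108) = f1^(-a) / 3456 := by
      calc f1^(a-2) * (f1^((4:ℝ)/3)/32) * (f1^(2/3-2*a)/108)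
          = (f1^(a-2)*f1^((4:ℝ)/3)*f1^(2/3-2*a))/3456 := by ring
        _ = f1^(-a)/3456 := by rw [e0]
    have hfin : (432*r^3)^(-a) ≤ f1^(-a) :=
      Real.rpow_le_rpow_of_nonpos hf10 hf1r (by linarith)
    calc (432*r^3)^(-a) / 3456 ≤ f1^(-a)/3456 := by linarith
      _ = f1^(a-2) * (f1^((4:ℝ)/3)/32) * (f1^(2/3-2*a)/108) := eqn.symm
      _ ≤ f1^(a-2) * f2 * f3 := step1
  rw [hf1, hf2, hf3, hS, hT, hX, hY, hW] at hgoal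
  exact hgoal
end
end Prop3Aux

theorem proposition3_core (a : ℝ) (ha : 0 < a) (ha' : a < 1 / 100) :
    Tendsto
      (fun p : ℂ × ℂ × ℂ =>
        ‖p.2.2 ^ 2 * (4 * p.2.2 + 9 * p.1 ^ 2) -
            27 * p.2.1 ^ 2 * (4 * p.1 ^ 3 + 2 * p.2.2 * p.1 + p.2.1 ^ 2)‖ ^ (a - 2) *
          (4 * ‖p.2.2 + 3 * p.1 ^ 2‖ ^ 4 +
            81 * ‖p.2.1 ^ 2 + 2 * p.1 ^ 3 + p.2.2 * p.1‖ ^ 2) *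
          (‖p.2.2‖ ^ 2 * ‖p.2.1‖ ^ (a - 2) +
            4 * ‖p.2.1‖ ^ 2 *
              (36 * ‖p.1‖ ^ 2 * ‖p.2.2‖ ^ (a - 2) + 1)))
      (nhdsWithin (0, 0, 0)
        {p : ℂ × ℂ × ℂ | p.2.1 ≠ 0 ∧ p.2.2 ≠ 0 ∧
          ‖p.2.2 ^ 2 * (4 * p.2.2 + 9 * p.1 ^ 2) -
            27 * p.2.1 ^ 2 * (4 * p.1 ^ 3 + 2 * p.2.2 * p.1 + p.2.1 ^ 2)‖ ≠ 0})
      atTop := by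
  set S : Set (ℂ × ℂ × ℂ) := {p : ℂ × ℂ × ℂ | p.2.1 ≠ 0 ∧ p.2.2 ≠ 0 ∧
      ‖p.2.2 ^ 2 * (4 * p.2.2 + 9 * p.1 ^ 2) -
        27 * p.2.1 ^ 2 * (4 * p.1 ^ 3 + 2 * p.2.2 * p.1 + p.2.1 ^ 2)‖ ≠ 0} with hSdef
  have hnormpos : ∀ p ∈ S, (0:ℝ) < ‖p‖ := by
    intro p hp
    have hpne : p ≠ 0 := by
      intro h
      exact hp.1 (by rw [h]; rfl)
    exact norm_pos_iff.2 hpne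
  have h1 : Tendsto (fun p : ℂ × ℂ × ℂ => 432*‖p‖^3)
      (nhdsWithin (0,0,0) S) (nhdsWithin 0 (Set.Ioi (0:ℝ))) := by
    rw [tendsto_nhdsWithin_iff]
    constructor
    · have hn : Tendsto (fun p : ℂ × ℂ × ℂ => ‖p‖) (nhdsWithin (0,0,0) S) (nhds 0) := by
        have h := (continuous_norm.tendsto ((0,0,0) : ℂ × ℂ × ℂ)).mono_left
          (nhdsWithin_le_nhds (s := S))
        simpa using h
      have h := (hn.pow 3).const_mul (432:ℝ)
      simpa using h
    · filter_upwards [self_mem_nhdsWithin] with p hp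
      have := hnormpos p hp
      exact Set.mem_Ioi.2 (by positivity)
  have h2 : Tendsto (fun v : ℝ => v^(-a)) (nhdsWithin 0 (Set.Ioi (0:ℝ))) atTop := by
    have ha1 : Tendsto (fun v : ℝ => v^a) (nhdsWithin 0 (Set.Ioi (0:ℝ)))
        (nhdsWithin 0 (Set.Ioi (0:ℝ))) := by
      rw [tendsto_nhdsWithin_iff]
      constructor
      · have hc : Tendsto (fun v : ℝ => v^a) (nhds 0) (nhds ((0:ℝ)^a)) :=
          (Real.continuousAt_rpow_const 0 a (Or.inr ha.le))
        rw [Real.zero_rpow ha.ne'] at hc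
        exact hc.mono_left nhdsWithin_le_nhds
      · filter_upwards [self_mem_nhdsWithin] with v hv
        exact Set.mem_Ioi.2 (Real.rpow_pos_of_pos hv a)
    have hinv := tendsto_inv_nhdsGT_zero.comp ha1
    refine hinv.congr' ?_
    filter_upwards [self_mem_nhdsWithin] with v hv
    rw [Function.comp_apply, ← Real.rpow_neg (le_of_lt hv)]
  have h3 := h2.comp h1
  have hG : Tendsto (fun p : ℂ × ℂ × ℂ => (432*‖p‖^3)^(-a) / 3456)
      (nhdsWithin (0,0,0) S) atTop := Tendsto.atTop_div_const (by norm_num) h3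
  refine tendsto_atTop_mono' _ ?_ hG
  have hev : ∀ᶠ p : ℂ × ℂ × ℂ in nhdsWithin (0,0,0) S, ‖p‖ < 1/100 := by
    apply Filter.Eventually.filter_mono nhdsWithin_le_nhds
    have hb : Metric.ball ((0,0,0) : ℂ × ℂ × ℂ) (1/100) ∈ nhds ((0,0,0) : ℂ × ℂ × ℂ) :=
      Metric.ball_mem_nhds _ (by norm_num)
    filter_upwards [hb] with p hp
    have : dist p ((0,0,0) : ℂ × ℂ × ℂ) < 1/100 := hp
    rwa [show ((0,0,0) : ℂ × ℂ × ℂ) = 0 from rfl, dist_zero_right] at this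
  filter_upwards [hev, self_mem_nhdsWithin] with p hp hpS
  have hxr : ‖p.1‖ ≤ ‖p‖ := by
    exact norm_fst_le p
  have hyr : ‖p.2.1‖ ≤ ‖p‖ := by
    exact (norm_fst_le p.2).trans (norm_snd_le p)
  have hwr : ‖p.2.2‖ ≤ ‖p‖ := by
    exact (norm_snd_le p.2).trans (norm_snd_le p)
  exact prop3_pointwise a ha ha' p.1 p.2.1 p.2.2 ‖p‖ hpS.1 hpS.2.1 hpS.2.2
    (hnormpos p hpS) hp.le hxr hyr hwr
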